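/- arXiv:1207.5548 — 7 statements merged into one kernel-verified Lean document; each statement's English description precedes it below -/
import Mathlib

section
/- For every real α, every natural number n and every real x, the n-th rising factorial of x satisfies the connection identity (x)_n = ∑_{k=0}^{n} S(n,k;α)·(x)_{k↑α}, where S(n,k;α) is the generalized Stirling number defined as a sum over compositions. -/
/-- Rising factorial `(x)_n = x(x+1)⋯(x+n−1)`. -/
noncomputable def risingFac (x : ℝ) (n : ℕ) : ℝ := ∏ i ∈ Finset.range n, (x + i)

/-- Rising factorial with increment `α`: `(x)_{n↑α} = ∏_{i<n} (x + iα)`. -/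
noncomputable def risingFacInc (x α : ℝ) (n : ℕ) : ℝ := ∏ i ∈ Finset.range n, (x + i * α)

/-- Falling factorial `(x)_{[n]} = x(x−1)⋯(x−n+1)`. -/
noncomputable def fallingFac (x : ℝ) (n : ℕ) : ℝ := ∏ i ∈ Finset.range n, (x - i)

/-- Compositions of `n` into `k` positive parts, as functions `Fin k → ℕ`. -/
def compositions (n k : ℕ) : Finset (Fin k → ℕ) :=
  (Fintype.piFinset fun _ => Finset.range (n + 1)).filter
    (fun f => (∀ i, 0 < f i) ∧ ∑ i, f i = n)

/-- Tuples of `k` nonnegative integers summing to `n`. -/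
def weakCompositions (n k : ℕ) : Finset (Fin k → ℕ) :=
  (Fintype.piFinset fun _ => Finset.range (n + 1)).filter (fun f => ∑ i, f i = n)

/-- Generalized (central) Stirling number
`S(n,k;α) = (n!/k!) ∑_{(n_1,…,n_k)} ∏_j (1−α)_{n_j−1}/n_j!`,
the sum over compositions of `n` into `k` positive parts. -/
noncomputable def genStirling (α : ℝ) (n k : ℕ) : ℝ :=
  (Nat.factorial n : ℝ) / (Nat.factorial k : ℝ) *
    ∑ f ∈ compositions n k, ∏ j, risingFac (1 - α) (f j - 1) / (Nat.factorial (f j) : ℝ)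

/-- Non-central generalized Stirling number
`S(n,k;α,γ) = ∑_{s=k}^n C(n,s) S(s,k;α) (−γ)_{n−s}`. -/
noncomputable def genStirlingNC (α γ : ℝ) (n k : ℕ) : ℝ :=
  ∑ s ∈ Finset.Icc k n, (n.choose s : ℝ) * genStirling α s k * risingFac (-γ) (n - s)

/-!
Mark one part of a composition of `n + 1` into `k + 1` parts and lower it by one, deleting it
when it equals one. Since the weights `w m = (1 - α)_{m-1} / m!` satisfy `w 1 = 1` and
`(m + 1) w (m + 1) = (m - α) w m`, this gives the triangular recurrence
`S(n+1,k+1;α) = (n - (k+1)α) S(n,k+1;α) + S(n,k;α)`. The connection identity then follows by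
induction on `n` from `(x)_{k↑α} (x + n) = (x)_{(k+1)↑α} + (n - kα) (x)_{k↑α}`.
-/

open Finset
open scoped Nat

lemma mem_compositions {n k : ℕ} {f : Fin k → ℕ} :
    f ∈ compositions n k ↔ (∀ i, 0 < f i) ∧ ∑ i, f i = n := by
  refine mem_filter.trans (and_iff_right_of_imp fun ⟨_, hsum⟩ => Fintype.mem_piFinset.2 fun i => ?_)
  rw [mem_range, Nat.lt_succ_iff, ← hsum]
  exact single_le_sum (fun i _ => Nat.zero_le (f i)) (mem_univ i)

lemma mem_compositions_succ_iff {n k : ℕ} (j : Fin (k + 1)) {f : Fin (k + 1) → ℕ} :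
    f ∈ compositions n (k + 1) ↔
      0 < f j ∧ (∀ i, 0 < Fin.removeNth j f i) ∧ f j + ∑ i, Fin.removeNth j f i = n := by
  rw [mem_compositions, Fin.forall_iff_succAbove j, Fin.sum_univ_succAbove _ j, and_assoc]
  rfl

section SplitPart

variable {M : Type*} [AddCommMonoid M] {n k : ℕ} (j : Fin (k + 1))

lemma sum_compositions_filter_eq_one (F : (Fin (k + 1) → ℕ) → M) :
    ∑ f ∈ (compositions (n + 1) (k + 1)).filter (· j = 1), F f =
      ∑ g ∈ compositions n k, F (j.insertNth 1 g) := by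
  have h_inv : ∀ f ∈ (compositions (n + 1) (k + 1)).filter (· j = 1),
      j.insertNth 1 (j.removeNth f) = f := fun f hf => by
    simpa only [(mem_filter.1 hf).2] using Fin.insertNth_self_removeNth j f
  refine sum_nbij' (Fin.removeNth j) (j.insertNth (α := fun _ => ℕ) 1) (fun f hf => ?_)
    (fun g hg => ?_) h_inv (fun g _ => Fin.removeNth_insertNth (α := fun _ => ℕ) j 1 g)
    (fun f hf => congrArg F (h_inv f hf).symm)
  · obtain ⟨⟨-, hpos, hsum⟩, hj⟩ := (mem_filter.1 hf).imp_left (mem_compositions_succ_iff j).1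
    exact mem_compositions.2 ⟨hpos, by omega⟩
  · obtain ⟨hpos, hsum⟩ := mem_compositions.1 hg
    rw [mem_filter, mem_compositions_succ_iff j, Fin.insertNth_apply_same, Fin.removeNth_insertNth]
    exact ⟨⟨Nat.one_pos, hpos, by omega⟩, rfl⟩

lemma sum_compositions_filter_ne_one (F : (Fin (k + 1) → ℕ) → M) :
    ∑ f ∈ (compositions (n + 1) (k + 1)).filter (· j ≠ 1), F f =
      ∑ g ∈ compositions n (k + 1), F (Function.update g j (g j + 1)) := by
  have h_inv : ∀ f ∈ (compositions (n + 1) (k + 1)).filter (· j ≠ 1),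
      Function.update f j (f j - 1 + 1) = f := fun f hf => by
    rw [Nat.sub_add_cancel ((mem_compositions_succ_iff j).1 (mem_filter.1 hf).1).1,
      Function.update_eq_self]
  refine sum_nbij' (fun f => Function.update f j (f j - 1))
    (fun g => Function.update g j (g j + 1)) (fun f hf => ?_) (fun g hg => ?_)
    (fun f hf => ?_) (fun g _ => ?_) (fun f hf => ?_)
  · obtain ⟨⟨hj, hpos, hsum⟩, hj1⟩ := (mem_filter.1 hf).imp_left (mem_compositions_succ_iff j).1
    rw [mem_compositions_succ_iff j, Function.update_self, Fin.removeNth_update]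
    exact ⟨by omega, hpos, by omega⟩
  · obtain ⟨hj, hpos, hsum⟩ := (mem_compositions_succ_iff j).1 hg
    rw [mem_filter, mem_compositions_succ_iff j, Function.update_self, Fin.removeNth_update]
    exact ⟨⟨by omega, hpos, by omega⟩, by omega⟩
  · simpa only [Function.update_self, Function.update_idem] using h_inv f hf
  · simp only [Function.update_self, Function.update_idem, Nat.add_sub_cancel,
      Function.update_eq_self]
  · simpa only [Function.update_self, Function.update_idem] using congrArg F (h_inv f hf).symm

lemma sum_compositions_succ_succ (F : (Fin (k + 1) → ℕ) → M) :
    ∑ f ∈ compositions (n + 1) (k + 1), F f =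
      ∑ g ∈ compositions n (k + 1), F (Function.update g j (g j + 1)) +
        ∑ g ∈ compositions n k, F (j.insertNth 1 g) := by
  rw [← sum_filter_not_add_sum_filter _ (· j = 1), sum_compositions_filter_ne_one,
    sum_compositions_filter_eq_one]

end SplitPart

lemma cast_sum_of_mem_compositions {R : Type*} [AddCommMonoidWithOne R] {n k : ℕ} {f : Fin k → ℕ}
    (hf : f ∈ compositions n k) : ∑ i, (f i : R) = n := by
  rw [← (mem_compositions.1 hf).2, Nat.cast_sum]

def compositionSum {R : Type*} [CommSemiring R] (w : ℕ → R) (n k : ℕ) : R :=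
  ∑ f ∈ compositions n k, ∏ i, w (f i)

section CompositionSum

variable {R : Type*} [CommRing R] {w : ℕ → R} {a : R}

lemma sum_apply_mul_prod_compositions_succ_succ (hw1 : w 1 = 1)
    (hw : ∀ m : ℕ, 0 < m → (m + 1 : R) * w (m + 1) = (m - a) * w m) {n k : ℕ} (j : Fin (k + 1)) :
    ∑ f ∈ compositions (n + 1) (k + 1), (f j : R) * ∏ i, w (f i) =
      ∑ g ∈ compositions n (k + 1), ((g j : R) - a) * ∏ i, w (g i) + compositionSum w n k := by
  rw [sum_compositions_succ_succ j, compositionSum]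
  congr 1
  · refine sum_congr rfl fun g hg => ?_
    have hj := ((mem_compositions_succ_iff j).1 hg).1
    simp only [Fin.prod_univ_succAbove _ j, Function.update_self,
      Function.update_of_ne (Fin.succAbove_ne j _)]
    push_cast
    rw [← mul_assoc, hw _ hj, mul_assoc]
  · refine sum_congr rfl fun g _ => ?_
    simp only [Fin.prod_univ_succAbove _ j, Fin.insertNth_apply_same, Fin.insertNth_apply_succAbove,
      hw1, Nat.cast_one, one_mul]

lemma succ_mul_compositionSum_succ_succ (hw1 : w 1 = 1)
    (hw : ∀ m : ℕ, 0 < m → (m + 1 : R) * w (m + 1) = (m - a) * w m) (n k : ℕ) :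
    (n + 1 : R) * compositionSum w (n + 1) (k + 1) =
      (n - (k + 1) * a) * compositionSum w n (k + 1) + (k + 1) * compositionSum w n k := by
  calc (n + 1 : R) * compositionSum w (n + 1) (k + 1)
      = ∑ j, ∑ f ∈ compositions (n + 1) (k + 1), (f j : R) * ∏ i, w (f i) := by
        rw [compositionSum, mul_sum, sum_comm]
        refine sum_congr rfl fun f hf => ?_
        rw [← sum_mul, cast_sum_of_mem_compositions hf, Nat.cast_succ]
    _ = ∑ j : Fin (k + 1), (∑ g ∈ compositions n (k + 1), ((g j : R) - a) * ∏ i, w (g i) +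
          compositionSum w n k) :=
        sum_congr rfl fun j _ => sum_apply_mul_prod_compositions_succ_succ hw1 hw j
    _ = (n - (k + 1) * a) * compositionSum w n (k + 1) + (k + 1) * compositionSum w n k := by
        rw [sum_add_distrib, sum_const, card_univ, Fintype.card_fin, nsmul_eq_mul,
          Nat.cast_succ, sum_comm]
        congr 1
        rw [compositionSum, mul_sum]
        refine sum_congr rfl fun g hg => ?_
        rw [← sum_mul, sum_sub_distrib, cast_sum_of_mem_compositions hg, sum_const, card_univ,
          Fintype.card_fin, nsmul_eq_mul, Nat.cast_succ]

end CompositionSum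

lemma compositions_eq_empty_of_lt {n k : ℕ} (h : n < k) : compositions n k = ∅ := by
  refine eq_empty_of_forall_notMem fun f hf => ?_
  obtain ⟨hpos, hsum⟩ := mem_compositions.1 hf
  have : k ≤ ∑ i, f i := by simpa using card_nsmul_le_sum univ f 1 fun i _ => hpos i
  omega

lemma compositions_zero_right {n : ℕ} (hn : n ≠ 0) : compositions n 0 = ∅ :=
  eq_empty_of_forall_notMem fun f hf => hn (by simpa using (mem_compositions.1 hf).2.symm)

noncomputable def stirlingWeight (α : ℝ) (m : ℕ) : ℝ := risingFac (1 - α) (m - 1) / (m ! : ℝ)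

lemma stirlingWeight_one (α : ℝ) : stirlingWeight α 1 = 1 := by
  simp [stirlingWeight, risingFac]

lemma succ_mul_stirlingWeight_succ (α : ℝ) {m : ℕ} (hm : 0 < m) :
    (m + 1 : ℝ) * stirlingWeight α (m + 1) = (m - α) * stirlingWeight α m := by
  obtain ⟨p, rfl⟩ := Nat.exists_eq_add_of_lt hm
  simp only [stirlingWeight, zero_add, Nat.add_sub_cancel, risingFac, prod_range_succ,
    Nat.factorial_succ]
  push_cast
  field_simp
  ring

lemma genStirling_eq_compositionSum (α : ℝ) (n k : ℕ) :
    genStirling α n k = n ! / k ! * compositionSum (stirlingWeight α) n k := rfl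

lemma genStirling_zero_zero (α : ℝ) : genStirling α 0 0 = 1 := by
  simp [genStirling_eq_compositionSum, compositionSum, compositions, Fintype.piFinset]

lemma genStirling_zero_right (α : ℝ) {n : ℕ} (hn : n ≠ 0) : genStirling α n 0 = 0 := by
  simp [genStirling_eq_compositionSum, compositionSum, compositions_zero_right hn]

lemma genStirling_eq_zero_of_lt (α : ℝ) {n k : ℕ} (h : n < k) : genStirling α n k = 0 := by
  simp [genStirling_eq_compositionSum, compositionSum, compositions_eq_empty_of_lt h]

lemma genStirling_succ_succ (α : ℝ) (n k : ℕ) :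
    genStirling α (n + 1) (k + 1) =
      (n - (k + 1) * α) * genStirling α n (k + 1) + genStirling α n k := by
  have h := succ_mul_compositionSum_succ_succ (stirlingWeight_one α)
    (fun _ => succ_mul_stirlingWeight_succ α) n k
  simp only [genStirling_eq_compositionSum, Nat.factorial_succ, Nat.cast_mul, Nat.cast_succ]
  field_simp
  linear_combination h

lemma sum_range_succ_shift_of_eq_zero {M : Type*} [AddCommMonoid M] {c : ℕ → M} {n : ℕ}
    (h_zero : c 0 = 0) (h_top : c (n + 1) = 0) :
    ∑ k ∈ range (n + 1), c k = ∑ k ∈ range (n + 1), c (k + 1) := by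
  rw [← add_zero (∑ k ∈ range (n + 1), c k), ← h_top, ← sum_range_succ, sum_range_succ', h_zero,
    add_zero]

lemma risingFac_succ (x : ℝ) (n : ℕ) : risingFac x (n + 1) = risingFac x n * (x + n) :=
  prod_range_succ _ n

lemma risingFacInc_succ (x α : ℝ) (k : ℕ) :
    risingFacInc x α (k + 1) = risingFacInc x α k * (x + k * α) :=
  prod_range_succ _ k

/-- Connection identity `(x)_n = ∑_{k≤n} S(n,k;α) (x)_{k↑α}`. -/
theorem rising_eq_sum_genStirling_risingFacInc (α : ℝ) (n : ℕ) (x : ℝ) :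
    risingFac x n = ∑ k ∈ Finset.range (n + 1), genStirling α n k * risingFacInc x α k := by
  induction n with
  | zero => simp [risingFac, risingFacInc, genStirling_zero_zero]
  | succ n ih =>
    set c : ℕ → ℝ := fun k => (n - k * α) * genStirling α n k * risingFacInc x α k
    have hc_zero : c 0 = 0 := by
      rcases eq_or_ne n 0 with rfl | hn
      · simp [c]
      · simp [c, genStirling_zero_right α hn]
    have hc_top : c (n + 1) = 0 := by simp [c, genStirling_eq_zero_of_lt α n.lt_succ_self]
    calc risingFac x (n + 1)
        = ∑ k ∈ range (n + 1), (genStirling α n k * risingFacInc x α (k + 1) + c k) := by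
          rw [risingFac_succ, ih, sum_mul]
          refine sum_congr rfl fun k _ => ?_
          rw [risingFacInc_succ]
          ring
      _ = ∑ k ∈ range (n + 1), genStirling α (n + 1) (k + 1) * risingFacInc x α (k + 1) := by
          rw [sum_add_distrib, sum_range_succ_shift_of_eq_zero hc_zero hc_top, ← sum_add_distrib]
          refine sum_congr rfl fun k _ => ?_
          rw [genStirling_succ_succ]
          simp only [c, Nat.cast_succ]
          ring
      _ = ∑ k ∈ range (n + 2), genStirling α (n + 1) k * risingFacInc x α k := by
          rw [sum_range_succ' _ (n + 1), genStirling_zero_right α n.succ_ne_zero, zero_mul,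
            add_zero]
end

section
/- For every real α ≠ 0, every natural number n and every real y, one has (yα)_n = ∑_{k=0}^{n} α^k·S(n,k;α)·(y)_k; that is, the generalized factorial coefficient C(n,k;α) defined by (yα)_n = ∑_k C(n,k;α)(y)_k equals α^k·S(n,k;α). -/
open Finset
open scoped Nat

section Pochhammer
open Polynomial

lemma risingFac_eq_eval (x : ℝ) (n : ℕ) : risingFac x n = (ascPochhammer ℝ n).eval x := by
  induction n with
  | zero => simp [risingFac]
  | succ n ih => simp [risingFac, prod_range_succ, ascPochhammer_succ_right, ← ih]

lemma factorial_mul_choose (x : ℝ) (n : ℕ) :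
    n ! * Ring.choose x n = (descPochhammer ℝ n).eval x := by
  rw [Ring.choose_eq_smul, smul_eq_mul, ← mul_assoc, mul_inv_cancel₀ (by positivity), one_mul,
    ← aeval_eq_smeval, aeval_def, ← eval_map, descPochhammer_map]

lemma risingFac_neg (x : ℝ) (n : ℕ) : risingFac (-x) n = (-1) ^ n * (n ! * Ring.choose x n) := by
  rw [risingFac_eq_eval, ascPochhammer_eval_neg_eq_descPochhammer, factorial_mul_choose]

lemma mul_risingFac_one_sub (α : ℝ) (j : ℕ) :
    α * risingFac (1 - α) j = (-1) ^ j * ((j + 1)! * Ring.choose α (j + 1)) := by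
  rw [factorial_mul_choose, descPochhammer_succ_left, eval_mul, eval_X, eval_comp, eval_sub,
    eval_X, eval_one, show 1 - α = -(α - 1) by ring, risingFac_eq_eval,
    ascPochhammer_eval_neg_eq_descPochhammer]
  ring

lemma risingFac_mul_eq_sum_of_forall_neg_natCast {α : ℝ} {n : ℕ} (c : ℕ → ℝ)
    (h : ∀ m : ℕ, risingFac (-m * α) n = ∑ k ∈ range (n + 1), c k * risingFac (-m) k) (y : ℝ) :
    risingFac (y * α) n = ∑ k ∈ range (n + 1), c k * risingFac y k := by
  have hpoly : (ascPochhammer ℝ n).comp (X * C α) =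
      ∑ k ∈ range (n + 1), C (c k) * ascPochhammer ℝ k := by
    refine eq_of_infinite_eval_eq _ _ <|
      (Set.infinite_range_of_injective (neg_injective.comp Nat.cast_injective)).mono ?_
    rintro _ ⟨m, rfl⟩
    simpa only [Set.mem_ofPred_eq, Function.comp_apply, eval_comp, eval_mul, eval_X, eval_C,
      eval_finsetSum, ← risingFac_eq_eval] using h m
  simpa only [eval_comp, eval_mul, eval_X, eval_C, eval_finsetSum, ← risingFac_eq_eval] using
    congrArg (eval y) hpoly

end Pochhammer

lemma mem_weakCompositions {n k : ℕ} {f : Fin k → ℕ} :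
    f ∈ weakCompositions n k ↔ ∑ i, f i = n := by
  simp only [weakCompositions, mem_filter, Fintype.mem_piFinset, mem_range, and_iff_right_iff_imp]
  rintro rfl i
  exact Nat.lt_succ_of_le (single_le_sum (fun j _ => Nat.zero_le (f j)) (mem_univ i))

lemma compositions_eq_filter_weakCompositions (n k : ℕ) :
    compositions n k = (weakCompositions n k).filter fun f => ∀ i, 0 < f i := by
  simp only [compositions, weakCompositions, filter_filter, and_comm]

namespace PowerSeries

section CommSemiring
variable {R : Type*} [CommSemiring R]

lemma coeff_pow_eq_sum_weakCompositions (p : R⟦X⟧) (n k : ℕ) :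
    coeff n (p ^ k) = ∑ f ∈ weakCompositions n k, ∏ i, coeff (f i) p := by
  rw [← Fin.prod_const, coeff_prod]
  exact sum_equiv Finsupp.equivFunOnFinite (by simp [mem_weakCompositions]) (fun _ _ => rfl)

lemma coeff_pow_eq_sum_compositions {p : R⟦X⟧} (hp : constantCoeff p = 0) (n k : ℕ) :
    coeff n (p ^ k) = ∑ f ∈ compositions n k, ∏ i, coeff (f i) p := by
  rw [coeff_pow_eq_sum_weakCompositions, compositions_eq_filter_weakCompositions, sum_filter_of_ne]
  intro f _ hf i
  refine Nat.pos_of_ne_zero fun h => hf (prod_eq_zero (mem_univ i) ?_)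
  rwa [h, coeff_zero_eq_constantCoeff_apply]

lemma coeff_pow_eq_zero_of_lt {p : R⟦X⟧} (hp : constantCoeff p = 0) {n k : ℕ} (h : n < k) :
    coeff n (p ^ k) = 0 := by
  obtain ⟨q, rfl⟩ := X_dvd_iff.2 hp
  rw [mul_pow, coeff_X_pow_mul', if_neg (by omega)]

end CommSemiring

lemma binomialSeries_natCast_mul {R A : Type*} [CommRing R] [BinomialRing R] [Ring A]
    [Algebra R A] (r : R) (m : ℕ) : binomialSeries A (m * r) = binomialSeries A r ^ m := by
  induction m with
  | zero => simp
  | succ m ih => rw [Nat.cast_succ, add_one_mul, binomialSeries_add, ih, pow_succ]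

end PowerSeries

section GeneratingFunction
open PowerSeries

-- `1 - (1 - X) ^ α`
noncomputable def oneSubOneSubPow (α : ℝ) : ℝ⟦X⟧ := 1 - rescale (-1) (binomialSeries ℝ α)

lemma constantCoeff_oneSubOneSubPow (α : ℝ) : constantCoeff (oneSubOneSubPow α) = 0 := by
  rw [oneSubOneSubPow, map_sub, map_one, ← coeff_zero_eq_constantCoeff_apply, coeff_rescale]
  simp

lemma coeff_succ_oneSubOneSubPow (α : ℝ) (j : ℕ) :
    coeff (j + 1) (oneSubOneSubPow α) = α * risingFac (1 - α) j / (j + 1)! := by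
  rw [eq_div_iff (by positivity), oneSubOneSubPow, map_sub, coeff_one, if_neg j.succ_ne_zero,
    coeff_rescale, binomialSeries_coeff, smul_eq_mul, mul_one, mul_risingFac_one_sub]
  ring

lemma pow_mul_genStirling (α : ℝ) (n k : ℕ) :
    α ^ k * genStirling α n k = n ! / k ! * coeff n (oneSubOneSubPow α ^ k) := by
  rw [coeff_pow_eq_sum_compositions (constantCoeff_oneSubOneSubPow α), genStirling,
    mul_left_comm, mul_sum]
  congr 1
  refine sum_congr rfl fun f hf => ?_
  rw [← Fin.prod_const, ← prod_mul_distrib]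
  refine prod_congr rfl fun i _ => ?_
  obtain ⟨j, hj⟩ := Nat.exists_eq_add_one.2 ((mem_filter.1 hf).2.1 i)
  rw [hj, add_tsub_cancel_right, coeff_succ_oneSubOneSubPow, mul_div_assoc]

lemma one_sub_oneSubOneSubPow_pow (α : ℝ) (m : ℕ) :
    (1 - oneSubOneSubPow α) ^ m = rescale (-1) (binomialSeries ℝ (m * α)) := by
  rw [oneSubOneSubPow, sub_sub_cancel, binomialSeries_natCast_mul, map_pow]

lemma neg_one_pow_mul_choose_natCast_mul (α : ℝ) (m n : ℕ) :
    (-1) ^ n * Ring.choose (m * α) n =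
      ∑ k ∈ range (n + 1), (-1) ^ k * m.choose k * coeff n (oneSubOneSubPow α ^ k) := by
  set g : ℕ → ℝ := fun k => (-1) ^ k * m.choose k * coeff n (oneSubOneSubPow α ^ k)
  have hbinom : (-1) ^ n * Ring.choose (m * α) n = ∑ k ∈ range (m + 1), g k := by
    calc (-1) ^ n * Ring.choose (m * α) n = coeff n ((-oneSubOneSubPow α + 1) ^ m) := by
          rw [neg_add_eq_sub, one_sub_oneSubOneSubPow_pow, coeff_rescale, binomialSeries_coeff,
            smul_eq_mul, mul_one]
      _ = ∑ k ∈ range (m + 1), g k := by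
          rw [add_pow, map_sum]
          refine sum_congr rfl fun k _ => ?_
          rw [one_pow, mul_one, ← map_natCast (C (R := ℝ)), coeff_mul_C, neg_pow,
            ← map_one (C (R := ℝ)), ← map_neg, ← map_pow, coeff_C_mul]
          ring
  have hvanish_m : ∀ k ≥ m + 1, g k = 0 := fun k hk => by
    simp [g, Nat.choose_eq_zero_of_lt hk]
  have hvanish_n : ∀ k ≥ n + 1, g k = 0 := fun k hk => by
    simp [g, coeff_pow_eq_zero_of_lt (constantCoeff_oneSubOneSubPow α) hk]
  rw [hbinom, ← eventually_constant_sum hvanish_m (Nat.le_add_right _ n),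
    eventually_constant_sum (n := m + 1 + n) hvanish_n (by omega)]

lemma risingFac_neg_natCast_mul (α : ℝ) (m n : ℕ) :
    risingFac (-m * α) n = ∑ k ∈ range (n + 1), α ^ k * genStirling α n k * risingFac (-m) k := by
  rw [neg_mul, risingFac_neg, mul_left_comm, neg_one_pow_mul_choose_natCast_mul, mul_sum]
  refine sum_congr rfl fun k _ => ?_
  rw [pow_mul_genStirling, risingFac_neg, Ring.choose_natCast]
  field_simp

end GeneratingFunction

theorem rising_mul_eq_sum_pow_genStirling_general (α : ℝ) (n : ℕ) (y : ℝ) :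
    risingFac (y * α) n =
      ∑ k ∈ Finset.range (n + 1), α ^ k * genStirling α n k * risingFac y k :=
  risingFac_mul_eq_sum_of_forall_neg_natCast _ (fun m => risingFac_neg_natCast_mul α m n) y

/-- For `α ≠ 0`, `(yα)_n = ∑_k α^k S(n,k;α) (y)_k`; i.e. the generalized factorial
coefficient `C(n,k;α)` equals `α^k S(n,k;α)`. -/
theorem rising_mul_eq_sum_pow_genStirling (α : ℝ) (hα : α ≠ 0) (n : ℕ) (y : ℝ) :
    risingFac (y * α) n =
      ∑ k ∈ Finset.range (n + 1), α ^ k * genStirling α n k * risingFac y k :=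
  rising_mul_eq_sum_pow_genStirling_general α n y
end

section
/- Let p ≥ 1, let z_1,…,z_p be reals, let m_1,…,m_p be positive integers with m = ∑_{j=1}^{p} m_j, and let n be a natural number. Then ∑ (n!/(n_1!⋯n_p!))·∏_{j=1}^{p} (z_j)_{n_j+m_j−1} = [∏_{j=1}^{p} (z_j)_{m_j−1}]·(m + ∑_{j=1}^{p} z_j − p)_n, where the sum ranges over all tuples (n_1,…,n_p) of nonnegative integers with ∑_{j=1}^{p} n_j = n. -/
/-!
Writing `(z)_{k+m-1} = (z)_{m-1} (z+m-1)_k` pulls out the factor `∏ⱼ (zⱼ)_{mⱼ-1}` and leaves the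
multinomial identity `∑ n!/∏ nⱼ! ∏ⱼ (aⱼ)_{nⱼ} = (∑ aⱼ)_n` with `aⱼ = zⱼ + mⱼ - 1`. After dividing by
`n!` it says that `a ↦ ((a)_k / k!)_k` turns addition into convolution, which follows by induction
on `p` from the Chu–Vandermonde identity for rising factorials; the latter is Mathlib's identity for
falling factorials, through `(x)_k = (-1)^k (-x)(-x-1)⋯(-x-k+1)`.
-/

open Finset Polynomial
open scoped Nat

lemma risingFac_add (x : ℝ) (m k : ℕ) :
    risingFac x (m + k) = risingFac x m * risingFac (x + m) k := by
  simp only [risingFac, prod_range_add, Nat.cast_add, add_assoc]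

lemma risingFac_eq_neg_one_pow_mul_smeval_descPochhammer (x : ℝ) (n : ℕ) :
    risingFac x n = (-1) ^ n * (descPochhammer ℤ n).smeval (-x) := by
  rw [← aeval_eq_smeval, ← eval_map_algebraMap, descPochhammer_map,
    descPochhammer_eval_eq_prod_range, risingFac]
  simp_rw [show ∀ i : ℕ, x + i = -1 * (-x - i) by intro; ring, prod_mul_distrib, prod_const,
    card_range]

lemma weakCompositions_eq_finAntidiagonal (n p : ℕ) :
    weakCompositions n p = finAntidiagonal p n := by
  ext f
  simp only [weakCompositions, mem_filter, Fintype.mem_piFinset, mem_range, mem_finAntidiagonal,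
    and_iff_right_iff_imp]
  intro h i
  have := single_le_sum (fun j _ => Nat.zero_le (f j)) (mem_univ i)
  omega

lemma sum_weakCompositions_succ {M : Type*} [AddCommMonoid M] (n p : ℕ)
    (F : (Fin (p + 1) → ℕ) → M) :
    ∑ f ∈ weakCompositions n (p + 1), F f =
      ∑ ij ∈ antidiagonal n, ∑ g ∈ weakCompositions ij.2 p, F (Fin.cons ij.1 g) := by
  simp only [weakCompositions_eq_finAntidiagonal]
  rw [finAntidiagonal, finAntidiagonal.aux, sum_disjiUnion]
  simp only [sum_map]
  rfl

lemma risingFac_add_eq_sum_antidiagonal (x y : ℝ) (n : ℕ) :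
    risingFac (x + y) n =
      ∑ ij ∈ antidiagonal n, (n.choose ij.1 : ℝ) * (risingFac x ij.1 * risingFac y ij.2) := by
  simp only [risingFac_eq_neg_one_pow_mul_smeval_descPochhammer, neg_add,
    Ring.descPochhammer_smeval_add n (Commute.all (-x) (-y)), mul_sum]
  refine sum_congr rfl fun ij hij => ?_
  rw [← mem_antidiagonal.mp hij, pow_add]
  ring

lemma risingFac_add_div_factorial (x y : ℝ) (n : ℕ) :
    risingFac (x + y) n / n ! =
      ∑ ij ∈ antidiagonal n, risingFac x ij.1 / ij.1 ! * (risingFac y ij.2 / ij.2 !) := by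
  rw [risingFac_add_eq_sum_antidiagonal, sum_div]
  refine sum_congr rfl fun ⟨i, j⟩ hij => ?_
  obtain rfl : i + j = n := mem_antidiagonal.mp hij
  rw [Nat.cast_add_choose]
  field_simp

lemma sum_weakCompositions_prod_risingFac_div_factorial (p : ℕ) (x : Fin p → ℝ) (n : ℕ) :
    ∑ f ∈ weakCompositions n p, ∏ j, risingFac (x j) (f j) / (f j)! =
      risingFac (∑ j, x j) n / n ! := by
  induction p generalizing n with
  | zero =>
    cases n <;> simp [weakCompositions_eq_finAntidiagonal, finAntidiagonal, finAntidiagonal.aux,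
      risingFac, prod_range_succ']
  | succ p ih =>
    simp only [sum_weakCompositions_succ, Fin.prod_univ_succ, Fin.cons_zero, Fin.cons_succ,
      ← mul_sum, ih, Fin.sum_univ_succ, risingFac_add_div_factorial]

lemma sum_weakCompositions_factorial_div_mul_prod_risingFac (p : ℕ) (x : Fin p → ℝ) (n : ℕ) :
    ∑ f ∈ weakCompositions n p, (n ! : ℝ) / (∏ j, ((f j)! : ℝ)) * ∏ j, risingFac (x j) (f j) =
      risingFac (∑ j, x j) n := by
  rw [← div_mul_cancel₀ (risingFac _ n) (Nat.cast_ne_zero.mpr n.factorial_ne_zero),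
    ← sum_weakCompositions_prod_risingFac_div_factorial, sum_mul]
  refine sum_congr rfl fun f _ => ?_
  rw [prod_div_distrib]
  ring

theorem sum_multinomial_rising_shifted_general (p : ℕ) (z : Fin p → ℝ)
    (mv : Fin p → ℕ) (hmv : ∀ j, 1 ≤ mv j) (n : ℕ) :
    ∑ f ∈ weakCompositions n p,
        (Nat.factorial n : ℝ) / (∏ j, (Nat.factorial (f j) : ℝ)) *
          ∏ j, risingFac (z j) (f j + mv j - 1) =
      (∏ j, risingFac (z j) (mv j - 1)) *
        risingFac (((∑ j, mv j : ℕ) : ℝ) + (∑ j, z j) - (p : ℝ)) n := by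
  set a : Fin p → ℝ := fun j => z j + (mv j - 1 : ℕ)
  have h_shift (f : Fin p → ℕ) : ∏ j, risingFac (z j) (f j + mv j - 1) =
      (∏ j, risingFac (z j) (mv j - 1)) * ∏ j, risingFac (a j) (f j) := by
    rw [← prod_mul_distrib]
    refine prod_congr rfl fun j _ => ?_
    rw [show f j + mv j - 1 = (mv j - 1) + f j by have := hmv j; omega, risingFac_add]
  have h_sum : ∑ j, a j = ((∑ j, mv j : ℕ) : ℝ) + ∑ j, z j - p := by
    simp only [a, sum_add_distrib, sum_sub_distrib, Nat.cast_sub (hmv _), Nat.cast_one,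
      Nat.cast_sum, sum_const, card_univ, Fintype.card_fin, nsmul_eq_mul, mul_one]
    ring
  simp_rw [h_shift, mul_left_comm _ (∏ j, risingFac (z j) (mv j - 1)), ← mul_sum,
    sum_weakCompositions_factorial_div_mul_prod_risingFac, h_sum]

/-- Multinomial-type identity for rising factorials:
`∑_{n_1+⋯+n_p=n} (n!/∏ n_j!) ∏_j (z_j)_{n_j+m_j−1}
  = (∏_j (z_j)_{m_j−1}) · (m + ∑_j z_j − p)_n`. -/
theorem sum_multinomial_rising_shifted (p : ℕ) (hp : 1 ≤ p) (z : Fin p → ℝ)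
    (mv : Fin p → ℕ) (hmv : ∀ j, 1 ≤ mv j) (n : ℕ) :
    ∑ f ∈ weakCompositions n p,
        (Nat.factorial n : ℝ) / (∏ j, (Nat.factorial (f j) : ℝ)) *
          ∏ j, risingFac (z j) (f j + mv j - 1) =
      (∏ j, risingFac (z j) (mv j - 1)) *
        risingFac (((∑ j, mv j : ℕ) : ℝ) + (∑ j, z j) - (p : ℝ)) n :=
  sum_multinomial_rising_shifted_general p z mv hmv n
end

section
/- Let α < 1 be real, let V(n,k) be an arbitrary array of real weights, let n ≥ 1 and let r, k be integers with 1 ≤ r ≤ k ≤ n. Let n_1,…,n_r be positive integers with N = n_1+⋯+n_r ≤ n and k − r ≤ n − N. Then the r-dimensional marginal of the multivariate Gibbs distribution satisfies: ∑ p(n_1,…,n_k) = [n!/(n_1!⋯n_r!·(n−N)!)]·[∏_{j=1}^{r} (1−α)_{n_j−1}]·(V(n,k)·(k−r)!/k!)·S(n−N, k−r; α), where the sum ranges over all tuples (n_{r+1},…,n_k) of positive integers with ∑_{j=r+1}^{k} n_j = n − N. -/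
/-- The multivariate Gibbs distribution of parameters `(n, α, V)`:
`p(n_1,…,n_k) = n!/(n_1!⋯n_k!·k!) · V(n,k) · ∏_j (1−α)_{n_j−1}`. -/
noncomputable def gibbsWeight (α : ℝ) (V : ℕ → ℕ → ℝ) (n k : ℕ) (f : Fin k → ℕ) : ℝ :=
  (Nat.factorial n : ℝ) / ((∏ j, (Nat.factorial (f j) : ℝ)) * (Nat.factorial k : ℝ)) *
    V n k * ∏ j, risingFac (1 - α) (f j - 1)

/- Fixing the first `r` block sizes, the Gibbs weight factors into a part depending only on
`n_1, …, n_r` and the product `∏_{j>r} (1−α)_{n_j−1} / n_j!`; summing the latter over the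
compositions of the remaining `n − N` into `k − r` parts gives `(k−r)!/(n−N)!`
times the generalized Stirling number `S(n−N, k−r; α)`. -/

open Nat

lemma Fin.prod_append_cast {α M : Type*} [CommMonoid M] {r s k : ℕ} (e : k = r + s)
    (a : Fin r → α) (b : Fin s → α) (F : α → M) :
    ∏ i : Fin k, F (Fin.append a b (Fin.cast e i)) = (∏ i, F (a i)) * ∏ i, F (b i) := by
  rw [← (finCongr e.symm).prod_comp]
  simp [Fin.prod_univ_add]

lemma gibbsWeight_append_cast (α : ℝ) (V : ℕ → ℕ → ℝ) {n r s k : ℕ} (e : k = r + s)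
    (a : Fin r → ℕ) (b : Fin s → ℕ) :
    gibbsWeight α V n k (fun i => Fin.append a b (Fin.cast e i)) =
      (n ! : ℝ) / (∏ i, ((a i)! : ℝ)) * (∏ i, risingFac (1 - α) (a i - 1)) * V n k / k ! *
        ∏ j, risingFac (1 - α) (b j - 1) / ((b j)! : ℝ) := by
  rw [gibbsWeight, Fin.prod_append_cast e a b (fun x => (x ! : ℝ)),
    Fin.prod_append_cast e a b (fun x => risingFac (1 - α) (x - 1)), Finset.prod_div_distrib]
  field_simp

lemma sum_compositions_eq_genStirling (α : ℝ) (m s : ℕ) :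
    ∑ f ∈ compositions m s, ∏ j, risingFac (1 - α) (f j - 1) / ((f j)! : ℝ) =
      (s ! : ℝ) / m ! * genStirling α m s := by
  rw [genStirling]
  field_simp

/-- The `r`-dimensional marginal of the multivariate Gibbs distribution. -/
theorem gibbs_marginal (α : ℝ) (V : ℕ → ℕ → ℝ) (n r k : ℕ)
    (hrk : r ≤ k) (nv : Fin r → ℕ) :
    ∑ g ∈ compositions (n - ∑ i, nv i) (k - r),
        gibbsWeight α V n k
          (fun i => Fin.append nv g (Fin.cast (show k = r + (k - r) by omega) i)) =
      (Nat.factorial n : ℝ) /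
          ((∏ i, (Nat.factorial (nv i) : ℝ)) * (Nat.factorial (n - ∑ i, nv i) : ℝ)) *
        (∏ i, risingFac (1 - α) (nv i - 1)) *
        (V n k * (Nat.factorial (k - r) : ℝ) / (Nat.factorial k : ℝ)) *
        genStirling α (n - ∑ i, nv i) (k - r) := by
  simp_rw [gibbsWeight_append_cast, ← Finset.mul_sum, sum_compositions_eq_genStirling]
  field_simp
end

section
/- For every real α and integers 1 ≤ k ≤ n, one has ∑_{n_1=1}^{n−k+1} n_1·binom(n,n_1)·(1−α)_{n_1−1}·S(n−n_1, k−1; α) = n·S(n−1, k−1; α, −(1−α)). (This is the identity underlying the formula E(N_1 | K_n = k) = (n/k)·S(n−1,k−1;α,−(1−α))/S(n,k;α) for the expected size of the first block given k blocks under any Gibbs partition model.) -/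
/-
Substituting `s = n - n₁` turns the left-hand side into a sum over `s ∈ [k-1, n-1]`, and the
absorption identity `n₁ C(n, n₁) = n C(n-1, n₁-1) = n C(n-1, s)` matches it term by term with
`n · S(n-1, k-1; α, -(1-α))`, whose rising factorial is `(1-α)_{n-1-s} = (1-α)_{n₁-1}`.
-/

theorem Nat.mul_choose_pred_sub {n a : ℕ} (ha : 1 ≤ a) (han : a ≤ n) :
    n * (n - 1).choose (n - a) = a * n.choose a := by
  obtain ⟨b, rfl⟩ : ∃ b, a = b + 1 := ⟨a - 1, by omega⟩
  obtain ⟨m, rfl⟩ : ∃ m, n = m + 1 := ⟨n - 1, by omega⟩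
  rw [Nat.add_sub_cancel, Nat.add_sub_add_right, Nat.choose_symm (by omega),
    Nat.add_one_mul_choose_eq, Nat.mul_comm]

/-- The identity underlying `E(N_1 | K_n = k) = (n/k)·S(n−1,k−1;α,−(1−α))/S(n,k;α)`:
`∑_{n_1=1}^{n−k+1} n_1 C(n,n_1) (1−α)_{n_1−1} S(n−n_1,k−1;α) = n·S(n−1,k−1;α,−(1−α))`. -/
theorem sum_firstBlock_genStirling (α : ℝ) (n k : ℕ) (hk : 1 ≤ k) (hkn : k ≤ n) :
    ∑ n1 ∈ Finset.Icc 1 (n - k + 1),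
        (n1 : ℝ) * (n.choose n1 : ℝ) * risingFac (1 - α) (n1 - 1) *
          genStirling α (n - n1) (k - 1) =
      (n : ℝ) * genStirlingNC α (-(1 - α)) (n - 1) (k - 1) := by
  rw [genStirlingNC, Finset.mul_sum]
  refine Finset.sum_nbij' (n - ·) (n - ·) ?_ ?_ ?_ ?_ ?_ <;>
    intro a ha <;> simp only [Finset.mem_Icc] at ha ⊢ <;> try omega
  have hchoose : (n : ℝ) * ((n - 1).choose (n - a) : ℝ) = a * n.choose a := by
    exact_mod_cast Nat.mul_choose_pred_sub ha.1 (by omega)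
  rw [show n - 1 - (n - a) = a - 1 by omega, neg_neg]
  linear_combination -(risingFac (1 - α) (a - 1) * genStirling α (n - a) (k - 1)) * hchoose
end

section
/- Let α < 1 be real, let V(n,k) be an arbitrary array of real weights, let n ≥ 1, and let r_1,…,r_n be nonnegative integers with R = ∑_{l=1}^{n} l·r_l ≤ n; put ρ = ∑_{l=1}^{n} r_l. Then the joint falling factorial moments of the Gibbs sampling formula satisfy: ∑ [∏_{l=1}^{n} (c_l)_{[r_l]}]·G(c) = (n!/∏_{l=1}^{n}(l!)^{r_l})·(∏_{l=1}^{n} [(1−α)_{l−1}]^{r_l}/(n−R)!)·∑_{k=ρ}^{ρ+n−R} V(n,k)·S(n−R, k−ρ; α), where the outer sum ranges over all tuples (c_1,…,c_n) of nonnegative integers with ∑_{i=1}^{n} i·c_i = n. -/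
/-- Count vectors `(c_1,…,c_n)` with `∑ i·c_i = n`, encoded as `c : Fin n → ℕ`
where index `i` represents size `i+1`. -/
def countVectors (n : ℕ) : Finset (Fin n → ℕ) :=
  (Fintype.piFinset fun _ => Finset.range (n + 1)).filter
    (fun c => ∑ i, (i.1 + 1) * c i = n)

/-- The Gibbs sampling formula
`G(c) = n!·V(n,k)·∏_i [(1−α)_{i−1}]^{c_i}/((i!)^{c_i} c_i!)`, `k = ∑ c_i`. -/
noncomputable def gibbsSampling (α : ℝ) (V : ℕ → ℕ → ℝ) (n : ℕ) (c : Fin n → ℕ) : ℝ :=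
  (Nat.factorial n : ℝ) * V n (∑ i, c i) *
    ∏ i, (risingFac (1 - α) i.1) ^ (c i) /
      ((Nat.factorial (i.1 + 1) : ℝ) ^ (c i) * (Nat.factorial (c i) : ℝ))

/-!
Since `(c)_{[r]} / c! = 1 / (c - r)!`, the substitution `c = d + r` turns the moment into
`n! ∏ w_l^{r_l}` times a sum over the partitions `d` of `n - R` of
`V(n, |d| + ρ) ∏ w_l^{d_l} / d_l!`, where `w_l = (1 - α)_{l-1} / l!`. Grouped by `|d| = j`,
the inner sums are `S(n - R, j; α) / (n - R)!`: both are `j! / (n - R)!` times the coefficient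
of `x^{n-R}` in `(∑_l w_l x^l)^j`, expanded once over ordered `j`-tuples of block sizes
(compositions) and once by the multinomial theorem.
-/
open Finset Polynomial Nat

section PowerCoefficients

variable {R ι : Type*} [CommSemiring R] [Fintype ι]

theorem coeff_pow_sum_C_mul_X_pow_eq_sum_fun (a : ι → R) (e : ι → ℕ) (j m : ℕ) :
    ((∑ l, C (a l) * X ^ e l) ^ j).coeff m =
      ∑ g : Fin j → ι with ∑ i, e (g i) = m, ∏ i, a (g i) := by
  rw [← Fin.prod_const, Finset.prod_univ_sum, finsetSum_coeff, sum_filter]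
  refine sum_congr rfl fun g _ => ?_
  rw [prod_mul_distrib, ← map_prod, prod_pow_eq_pow_sum, coeff_C_mul_X_pow]
  simp only [eq_comm]

theorem coeff_pow_sum_C_mul_X_pow_eq_sum_multinomial [DecidableEq ι]
    (a : ι → R) (e : ι → ℕ) (j m : ℕ) :
    ((∑ l, C (a l) * X ^ e l) ^ j).coeff m =
      ∑ d ∈ piAntidiag univ j with ∑ l, e l * d l = m,
        (multinomial univ d : R) * ∏ l, a l ^ d l := by
  rw [sum_pow_eq_sum_piAntidiag, finsetSum_coeff, sum_filter]
  refine sum_congr rfl fun d _ => ?_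
  simp_rw [mul_pow, ← C_pow, prod_mul_distrib, ← map_prod, ← pow_mul, prod_pow_eq_pow_sum,
    ← C_eq_natCast, ← mul_assoc, ← map_mul, coeff_C_mul_X_pow, mul_comm (e _), eq_comm]

end PowerCoefficients

/-- Multiplicity vectors of the partitions of `m` into parts of size at most `n`: `c i` counts
the parts of size `i + 1`. -/
def partCounts (n m : ℕ) : Finset (Fin n → ℕ) :=
  (Fintype.piFinset fun _ => range (m + 1)).filter fun c => ∑ i, (i.1 + 1) * c i = m

theorem countVectors_eq_partCounts (n : ℕ) : countVectors n = partCounts n n := rfl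

section PartCounts

variable {n m : ℕ}

theorem le_sum_succ_mul (c : Fin n → ℕ) (i : Fin n) : c i ≤ ∑ l, (l.1 + 1) * c l :=
  (Nat.le_mul_of_pos_left _ i.1.succ_pos).trans
    (single_le_sum (f := fun l : Fin n => (l.1 + 1) * c l) (fun _ _ => zero_le _) (mem_univ i))

theorem sum_le_sum_succ_mul (c : Fin n → ℕ) : ∑ l, c l ≤ ∑ l, (l.1 + 1) * c l :=
  sum_le_sum fun i _ => Nat.le_mul_of_pos_left _ i.1.succ_pos

theorem mem_partCounts {c : Fin n → ℕ} :
    c ∈ partCounts n m ↔ ∑ i, (i.1 + 1) * c i = m := by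
  refine ⟨fun h => (mem_filter.1 h).2, fun h => mem_filter.2 ⟨?_, h⟩⟩
  exact Fintype.mem_piFinset.2 fun i => mem_range.2 (Nat.lt_succ_of_le (h ▸ le_sum_succ_mul c i))

theorem sum_compositions_eq_sum_succ {M : Type*} [AddCommMonoid M] {j : ℕ} (hm : m ≤ n)
    (F : (Fin j → ℕ) → M) :
    ∑ f ∈ compositions m j, F f =
      ∑ g : Fin j → Fin n with ∑ i, ((g i : ℕ) + 1) = m, F fun i => g i + 1 := by
  symm
  refine sum_bij (fun g _ i => (g i : ℕ) + 1) ?_ ?_ ?_ (fun _ _ => rfl)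
  · intro g hg
    have hsum := (mem_filter.1 hg).2
    refine mem_filter.2 ⟨Fintype.mem_piFinset.2 fun i => mem_range.2 ?_, fun i => succ_pos _,
      hsum⟩
    have := single_le_sum (f := fun i => (g i : ℕ) + 1) (fun _ _ => zero_le _) (mem_univ i)
    omega
  · intro g _ g' _ h
    funext i
    exact Fin.ext (Nat.succ_injective (congrFun h i))
  · intro f hf
    obtain ⟨-, hpos, hsum⟩ := mem_filter.1 hf
    have hlt (i : Fin j) : f i - 1 < n := by
      have := single_le_sum (f := f) (fun _ _ => zero_le _) (mem_univ i)
      have := hpos i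
      omega
    refine ⟨fun i => ⟨f i - 1, hlt i⟩, mem_filter.2 ⟨mem_univ _, ?_⟩, ?_⟩
    · rw [← hsum]
      exact sum_congr rfl fun i _ => Nat.sub_add_cancel (hpos i)
    · funext i
      exact Nat.sub_add_cancel (hpos i)

theorem sum_compositions_prod_eq_sum_partCounts {R : Type*} [CommSemiring R] (a : ℕ → R)
    (hm : m ≤ n) (j : ℕ) :
    ∑ f ∈ compositions m j, ∏ i, a (f i) =
      ∑ d ∈ partCounts n m with ∑ l, d l = j,
        (multinomial univ d : R) * ∏ l : Fin n, a (l + 1) ^ d l := by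
  have hset : {d ∈ piAntidiag (univ : Finset (Fin n)) j | ∑ l : Fin n, (l.1 + 1) * d l = m} =
      {d ∈ partCounts n m | ∑ l, d l = j} := by
    ext d
    simp [mem_partCounts, and_comm]
  rw [sum_compositions_eq_sum_succ hm,
    ← coeff_pow_sum_C_mul_X_pow_eq_sum_fun (fun l : Fin n => a (l + 1)) (fun l => l.1 + 1),
    coeff_pow_sum_C_mul_X_pow_eq_sum_multinomial, hset]

end PartCounts

/-- The weight of a block of size `i + 1` in the Gibbs sampling formula. -/
noncomputable def blockWeight (α : ℝ) (i : ℕ) : ℝ := risingFac (1 - α) i / (i + 1)!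

theorem genStirling_eq_sum_partCounts (α : ℝ) {n m : ℕ} (hm : m ≤ n) (j : ℕ) :
    genStirling α m j =
      m ! * ∑ d ∈ partCounts n m with ∑ l, d l = j,
        ∏ l : Fin n, blockWeight α l ^ d l / (d l)! := by
  rw [genStirling, sum_compositions_prod_eq_sum_partCounts
    (fun k => risingFac (1 - α) (k - 1) / (k ! : ℝ)) hm, mul_sum, mul_sum]
  refine sum_congr rfl fun d hd => ?_
  have hspec : ((∏ l, (d l)! : ℕ) : ℝ) * multinomial univ d = j ! := by
    rw [← Nat.cast_mul, multinomial_spec, (mem_filter.1 hd).2]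
  have hw (l : ℕ) : risingFac (1 - α) (l + 1 - 1) / ((l + 1)! : ℝ) = blockWeight α l := by
    rw [Nat.add_sub_cancel, blockWeight]
  simp only [hw, prod_div_distrib]
  rw [Nat.cast_prod] at hspec
  have : (∏ l : Fin n, ((d l)! : ℝ)) ≠ 0 := prod_ne_zero_iff.2 fun _ _ => by positivity
  field_simp
  linear_combination (∏ l : Fin n, blockWeight α l ^ d l) * hspec

theorem prod_blockWeight_pow {n : ℕ} (α : ℝ) (r : Fin n → ℕ) :
    ∏ l : Fin n, blockWeight α l ^ r l =
      (∏ l : Fin n, risingFac (1 - α) l ^ r l) / ∏ l : Fin n, ((l.1 + 1)! : ℝ) ^ r l := by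
  simp only [blockWeight, div_pow, prod_div_distrib]

theorem gibbsSampling_eq (α : ℝ) (V : ℕ → ℕ → ℝ) (n : ℕ) (c : Fin n → ℕ) :
    gibbsSampling α V n c =
      n ! * V n (∑ i, c i) * ∏ i : Fin n, blockWeight α i ^ c i / (c i)! := by
  simp only [gibbsSampling, blockWeight, div_pow, div_div]

theorem fallingFac_natCast (c r : ℕ) : fallingFac (c : ℝ) r = c.descFactorial r := by
  rw [fallingFac, descFactorial_eq_prod_range, Nat.cast_prod]
  rcases le_or_gt r c with h | h
  · exact prod_congr rfl fun i hi => (Nat.cast_sub ((mem_range.1 hi).le.trans h)).symm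
  · rw [prod_eq_zero (mem_range.2 h) (sub_self _), prod_eq_zero (mem_range.2 h) (by simp)]

theorem prod_fallingFac_natCast_eq_zero {ι : Type*} [Fintype ι] {c r : ι → ℕ}
    (h : ¬r ≤ c) :
    ∏ l, fallingFac (c l : ℝ) (r l) = 0 := by
  obtain ⟨l, hl⟩ := not_forall.1 (mt Pi.le_def.2 h)
  exact prod_eq_zero (mem_univ l) (by
    rw [fallingFac_natCast, descFactorial_of_lt (not_le.1 hl), Nat.cast_zero])

theorem fallingFac_natCast_add_mul_pow_div_factorial (x : ℝ) (d r : ℕ) :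
    fallingFac ((d + r : ℕ) : ℝ) r * (x ^ (d + r) / (d + r)!) = x ^ r * (x ^ d / d !) := by
  have h : (d ! : ℝ) * (d + r).descFactorial r = (d + r)! := by
    exact_mod_cast Nat.add_sub_cancel d r ▸ factorial_mul_descFactorial (Nat.le_add_left r d)
  rw [fallingFac_natCast, ← h, pow_add]
  have : (d ! : ℝ) ≠ 0 := by positivity
  have : ((d + r).descFactorial r : ℝ) ≠ 0 := by
    exact_mod_cast (descFactorial_pos.2 (Nat.le_add_left r d)).ne'
  field_simp

theorem sum_succ_mul_add {n : ℕ} (d r : Fin n → ℕ) :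
    ∑ i, (i.1 + 1) * (d + r) i = ∑ i, (i.1 + 1) * d i + ∑ i, (i.1 + 1) * r i := by
  simp only [Pi.add_apply, mul_add, sum_add_distrib]

theorem sum_partCounts_eq_sum_add {M : Type*} [AddCommMonoid M] {n m : ℕ} {r : Fin n → ℕ}
    (hr : ∑ i, (i.1 + 1) * r i ≤ m) (F : (Fin n → ℕ) → M)
    (hF : ∀ c, ¬r ≤ c → F c = 0) :
    ∑ c ∈ partCounts n m, F c =
      ∑ d ∈ partCounts n (m - ∑ i, (i.1 + 1) * r i), F (d + r) := by
  classical
  have himage : (partCounts n (m - ∑ i, (i.1 + 1) * r i)).image (· + r) =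
      {c ∈ partCounts n m | r ≤ c} := by
    ext c
    simp only [mem_image, mem_filter, mem_partCounts]
    constructor
    · rintro ⟨d, hd, rfl⟩
      exact ⟨by rw [sum_succ_mul_add]; omega, le_add_self⟩
    · rintro ⟨hc, hrc⟩
      refine ⟨c - r, ?_, tsub_add_cancel_of_le hrc⟩
      have := sum_succ_mul_add (c - r) r
      rw [tsub_add_cancel_of_le hrc] at this
      omega
  rw [← sum_image fun _ _ _ _ => add_right_cancel, himage, sum_filter_of_ne]
  exact fun c _ hc => not_not.1 (mt (hF c) hc)

theorem prod_fallingFac_mul_gibbsSampling_add (α : ℝ) (V : ℕ → ℕ → ℝ) {n : ℕ}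
    (d r : Fin n → ℕ) :
    (∏ l, fallingFac ((d + r) l : ℝ) (r l)) * gibbsSampling α V n (d + r) =
      n ! * (∏ l : Fin n, blockWeight α l ^ r l) *
        (V n (∑ l, d l + ∑ l, r l) * ∏ l : Fin n, blockWeight α l ^ d l / (d l)!) := by
  have hprod : (∏ l, fallingFac ((d + r) l : ℝ) (r l)) *
      ∏ l : Fin n, blockWeight α l ^ (d + r) l / ((d + r) l)! =
        (∏ l : Fin n, blockWeight α l ^ r l) *
          ∏ l : Fin n, blockWeight α l ^ d l / (d l)! := by
    simp only [← prod_mul_distrib, Pi.add_apply, fallingFac_natCast_add_mul_pow_div_factorial]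
  rw [gibbsSampling_eq, Pi.add_def, sum_add_distrib]
  linear_combination (n ! * V n (∑ l, d l + ∑ l, r l)) * hprod

theorem sum_Icc_add_eq_sum_range {M : Type*} [AddCommMonoid M] (f : ℕ → M) (a m : ℕ) :
    ∑ k ∈ Icc a (a + m), f k = ∑ j ∈ range (m + 1), f (a + j) := by
  rw [← Ico_add_one_right_eq_Icc, sum_Ico_eq_sum_range, add_assoc, Nat.add_sub_cancel_left]

theorem gibbsSampling_joint_fallingFactorial_moments_general (α : ℝ)
    (V : ℕ → ℕ → ℝ) (n : ℕ) (r : Fin n → ℕ)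
    (hR : ∑ l, (l.1 + 1) * r l ≤ n) :
    ∑ c ∈ countVectors n, (∏ l, fallingFac (c l : ℝ) (r l)) * gibbsSampling α V n c =
      (Nat.factorial n : ℝ) / (∏ l, (Nat.factorial (l.1 + 1) : ℝ) ^ (r l)) *
        ((∏ l, (risingFac (1 - α) l.1) ^ (r l)) /
          (Nat.factorial (n - ∑ l, (l.1 + 1) * r l) : ℝ)) *
        ∑ k ∈ Finset.Icc (∑ l, r l) (∑ l, r l + (n - ∑ l, (l.1 + 1) * r l)),
          V n k * genStirling α (n - ∑ l, (l.1 + 1) * r l) (k - ∑ l, r l) := by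
  set m := n - ∑ l, (l.1 + 1) * r l
  have hfiber : ∀ d ∈ partCounts n m, ∑ l, d l ∈ range (m + 1) := fun d hd =>
    mem_range_succ_iff.2 (mem_partCounts.1 hd ▸ sum_le_sum_succ_mul d)
  rw [countVectors_eq_partCounts, sum_partCounts_eq_sum_add hR _ fun c hc => by
    rw [prod_fallingFac_natCast_eq_zero hc, zero_mul]]
  simp only [prod_fallingFac_mul_gibbsSampling_add]
  rw [← mul_sum, ← sum_fiberwise_of_maps_to hfiber, sum_Icc_add_eq_sum_range,
    prod_blockWeight_pow, mul_sum, mul_sum]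
  refine sum_congr rfl fun j _ => ?_
  rw [sum_congr rfl fun d hd => by rw [(mem_filter.1 hd).2, add_comm], ← mul_sum,
    add_tsub_cancel_left, genStirling_eq_sum_partCounts (m := m) α (Nat.sub_le _ _)]
  field_simp

/-- Joint falling factorial moments of the Gibbs sampling formula. -/
theorem gibbsSampling_joint_fallingFactorial_moments (α : ℝ) (hα : α < 1)
    (V : ℕ → ℕ → ℝ) (n : ℕ) (hn : 1 ≤ n) (r : Fin n → ℕ)
    (hR : ∑ l, (l.1 + 1) * r l ≤ n) :
    ∑ c ∈ countVectors n, (∏ l, fallingFac (c l : ℝ) (r l)) * gibbsSampling α V n c =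
      (Nat.factorial n : ℝ) / (∏ l, (Nat.factorial (l.1 + 1) : ℝ) ^ (r l)) *
        ((∏ l, (risingFac (1 - α) l.1) ^ (r l)) /
          (Nat.factorial (n - ∑ l, (l.1 + 1) * r l) : ℝ)) *
        ∑ k ∈ Finset.Icc (∑ l, r l) (∑ l, r l + (n - ∑ l, (l.1 + 1) * r l)),
          V n k * genStirling α (n - ∑ l, (l.1 + 1) * r l) (k - ∑ l, r l) :=
  gibbsSampling_joint_fallingFactorial_moments_general α V n r hR
end

section
/- Fix integers n, j, m ≥ 1 with j ≤ n, a composition (n_1,…,n_j) of n into j positive parts, a real α < 1, and real weights V(n,k) with V(n,j) ≠ 0. Let r, k be integers with 1 ≤ r ≤ k ≤ m and let s_1,…,s_r be positive integers with σ = ∑_{i=1}^{r} s_i and σ + (k−r) ≤ m. Then the r-dimensional marginal of the conditional multivariate Gibbs distribution satisfies: ∑ P(s_1,…,s_k; k) = [m!·∏_{i=1}^{r} (1−α)_{s_i−1}/(s_1!⋯s_r!·(m−σ)!)]·((k−r)!/k!)·(V(n+m,j+k)/V(n,j))·S(m−σ, k−r; α, −(n−jα)), where the sum ranges over all tuples (s_{r+1},…,s_k)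 of positive integers with ∑_{i=1}^{k} s_i ≤ m. -/
/-- The conditional multivariate Gibbs distribution weight
`P(s_1,…,s_k;k) = m!/(s_1!⋯s_k!·k!·(m−s)!)·(V(n+m,j+k)/V(n,j))·(n−jα)_{m−s}·
∏_i (1−α)_{s_i−1}`, where `s = ∑ s_i`. -/
noncomputable def condMulti (α : ℝ) (V : ℕ → ℕ → ℝ) (n j m : ℕ) (k : ℕ)
    (sv : Fin k → ℕ) : ℝ :=
  (Nat.factorial m : ℝ) /
      ((∏ i, (Nat.factorial (sv i) : ℝ)) * (Nat.factorial k : ℝ) *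
        (Nat.factorial (m - ∑ i, sv i) : ℝ)) *
    (V (n + m) (j + k) / V n j) * risingFac ((n : ℝ) - j * α) (m - ∑ i, sv i) *
    ∏ i, risingFac (1 - α) (sv i - 1)

/-!
Split the free coordinates `(s_{r+1}, …, s_k)` according to their total `t`. For fixed `t` they
range over the compositions of `t` into `k - r` parts, and the Gibbs weight factors into a part
depending only on `t` times `∏ (1-α)_{s_i-1} / s_i!`; summed over the compositions, the latter is
`(k-r)!/t! · S(t, k-r; α)`. With `M = m - σ`, the identity `C(M,t) · t! · (M-t)! = M!` then turns
the sum over `t` into the non-central Stirling number `S(M, k-r; α, -(n - jα))`.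
-/

open Finset

namespace Fin

@[to_additive]
theorem prod_comp_append_cast {M α : Type*} [CommMonoid M] {r q k : ℕ} (e : k = r + q)
    (u : Fin r → α) (v : Fin q → α) (h : α → M) :
    ∏ i, h (Fin.append u v (Fin.cast e i)) = (∏ i, h (u i)) * ∏ i, h (v i) := by
  rw [Fin.prod_congr' (fun i => h (Fin.append u v i)) e, Fin.prod_univ_add]
  simp only [Fin.append_left, Fin.append_right]

end Fin

theorem filter_piFinset_Icc_sum_eq {q m t : ℕ} (ht : t ≤ m) :
    {g ∈ Fintype.piFinset fun _ : Fin q => Icc 1 m | ∑ i, g i = t} = compositions t q := by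
  ext g
  simp only [compositions, mem_filter, Fintype.mem_piFinset, mem_Icc, mem_range]
  constructor
  · rintro ⟨hpos, hsum⟩
    refine ⟨fun i => Nat.lt_succ_of_le ?_, fun i => (hpos i).1, hsum⟩
    exact hsum ▸ single_le_sum (fun i _ => Nat.zero_le (g i)) (mem_univ i)
  · rintro ⟨-, hpos, hsum⟩
    refine ⟨fun i => ⟨hpos i, le_trans ?_ ht⟩, hsum⟩
    exact hsum ▸ single_le_sum (fun i _ => Nat.zero_le (g i)) (mem_univ i)

theorem sum_filter_piFinset_Icc_eq_sum_compositions {β : Type*} [AddCommMonoid β]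
    {q m σ : ℕ} (hσ : σ ≤ m) (F : (Fin q → ℕ) → β) :
    ∑ g ∈ (Fintype.piFinset fun _ : Fin q => Icc 1 m).filter (fun g => σ + ∑ i, g i ≤ m), F g =
      ∑ t ∈ Icc q (m - σ), ∑ g ∈ compositions t q, F g := by
  have htotal : ∀ g ∈ (Fintype.piFinset fun _ : Fin q => Icc 1 m).filter
      (fun g => σ + ∑ i, g i ≤ m), ∑ i, g i ∈ Icc q (m - σ) := by
    intro g hg
    simp only [mem_filter, Fintype.mem_piFinset, mem_Icc] at hg ⊢
    refine ⟨?_, by omega⟩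
    simpa using sum_le_sum fun i (_ : i ∈ univ) => (hg.1 i).1
  rw [← sum_fiberwise_of_maps_to htotal]
  refine sum_congr rfl fun t ht => ?_
  have hσt : σ + t ≤ m := by rw [mem_Icc] at ht; omega
  rw [filter_filter, ← filter_piFinset_Icc_sum_eq (le_of_add_le_right hσt)]
  congr 1
  ext g
  simp only [mem_filter]
  constructor
  · rintro ⟨hg, -, hsum⟩
    exact ⟨hg, hsum⟩
  · rintro ⟨hg, hsum⟩
    exact ⟨hg, hsum ▸ hσt, hsum⟩

theorem sum_compositions_prod_risingFac_div_factorial (α : ℝ) (t q : ℕ) :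
    ∑ g ∈ compositions t q, ∏ i, risingFac (1 - α) (g i - 1) / (g i).factorial =
      q.factorial / t.factorial * genStirling α t q := by
  rw [genStirling]
  field_simp

theorem condMulti_append (α : ℝ) (V : ℕ → ℕ → ℝ) (n j m : ℕ) {r q k : ℕ} (e : k = r + q)
    (u : Fin r → ℕ) (v : Fin q → ℕ) :
    condMulti α V n j m k (fun i => Fin.append u v (Fin.cast e i)) =
      m.factorial / ((∏ i, ((u i).factorial : ℝ)) * k.factorial *
          (m - ∑ i, u i - ∑ i, v i).factorial) *
        (V (n + m) (j + k) / V n j) * risingFac (n - j * α) (m - ∑ i, u i - ∑ i, v i) *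
        (∏ i, risingFac (1 - α) (u i - 1)) *
        ∏ i, risingFac (1 - α) (v i - 1) / (v i).factorial := by
  have hsum : ∑ i, Fin.append u v (Fin.cast e i) = ∑ i, u i + ∑ i, v i :=
    Fin.sum_comp_append_cast e u v id
  rw [condMulti, hsum,
    Fin.prod_comp_append_cast e u v (fun x => (x.factorial : ℝ)),
    Fin.prod_comp_append_cast e u v (fun x => risingFac (1 - α) (x - 1)),
    prod_div_distrib, Nat.sub_add_eq]
  ring

theorem sum_compositions_condMulti_append (α : ℝ) (V : ℕ → ℕ → ℝ) (n j m : ℕ) {r q k : ℕ}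
    (e : k = r + q) (u : Fin r → ℕ) (t : ℕ) :
    ∑ g ∈ compositions t q, condMulti α V n j m k (fun i => Fin.append u g (Fin.cast e i)) =
      m.factorial / ((∏ i, ((u i).factorial : ℝ)) * k.factorial *
          (m - ∑ i, u i - t).factorial) *
        (V (n + m) (j + k) / V n j) * risingFac (n - j * α) (m - ∑ i, u i - t) *
        (∏ i, risingFac (1 - α) (u i - 1)) * (q.factorial / t.factorial * genStirling α t q) := by
  rw [← sum_compositions_prod_risingFac_div_factorial, mul_sum]
  refine sum_congr rfl fun g hg => ?_
  rw [condMulti_append, (mem_filter.1 hg).2.2]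

/-- The `r`-dimensional marginal of the conditional multivariate Gibbs distribution. -/
theorem condMulti_marginal (n j m : ℕ)
    (α : ℝ) (V : ℕ → ℕ → ℝ)
    (r k : ℕ) (hrk : r ≤ k)
    (sv : Fin r → ℕ) (hσ : ∑ i, sv i + (k - r) ≤ m) :
    ∑ g ∈ (Fintype.piFinset fun _ : Fin (k - r) => Finset.Icc 1 m).filter
        (fun g => ∑ i, sv i + ∑ i, g i ≤ m),
        condMulti α V n j m k
          (fun i => Fin.append sv g (Fin.cast (show k = r + (k - r) by omega) i)) =
      (Nat.factorial m : ℝ) * (∏ i, risingFac (1 - α) (sv i - 1)) /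
          ((∏ i, (Nat.factorial (sv i) : ℝ)) * (Nat.factorial (m - ∑ i, sv i) : ℝ)) *
        ((Nat.factorial (k - r) : ℝ) / (Nat.factorial k : ℝ)) *
        (V (n + m) (j + k) / V n j) *
        genStirlingNC α (-((n : ℝ) - j * α)) (m - ∑ i, sv i) (k - r) := by
  rw [sum_filter_piFinset_Icc_eq_sum_compositions (by omega), genStirlingNC, neg_neg, mul_sum]
  refine sum_congr rfl fun t ht => ?_
  have htσ : t ≤ m - ∑ i, sv i := (mem_Icc.1 ht).2
  have hchoose : ((m - ∑ i, sv i).choose t : ℝ) ≠ 0 := Nat.cast_ne_zero.2 (Nat.choose_pos htσ).ne'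
  rw [sum_compositions_condMulti_append, ← Nat.choose_mul_factorial_mul_factorial htσ]
  push_cast
  field_simp
end
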